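/- arXiv:1604.04134 — 3 statements merged into one kernel-verified Lean document; each statement's English description precedes it below -/
import Mathlib

section
/- The expansion function satisfies the system of PDE (3.6): for each k ∈ {1,2,3}, δ_k Θ = ∂_0(bar Γ^i_{ik}) − Θ a_k on U (summation over i ∈ {1,2,3} in bar Γ^i_{ik}). -/
noncomputable section

/-- Points of the spacetime coordinate domain `U ⊆ ℝ⁴`. -/
abbrev Pt : Type := Fin 4 → ℝ

/-- Scalar fields on `ℝ⁴`. -/
abbrev SF : Type := Pt → ℝ

/-- Partial derivative `∂_a f` in the `x^a`-coordinate direction. -/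
def pd (a : Fin 4) (f : SF) : SF := fun x => fderiv ℝ f x (Pi.single a 1)

/-- Threading derivative `δ_i f = ∂_i f − A_i ∂_0 f`. -/
def sd (A : Fin 3 → SF) (i : Fin 3) (f : SF) : SF := fun x =>
  pd i.succ f x - A i x * pd 0 f x

/-- `A_i = −Φ⁻² ξ_i`. -/
def Acoef (Φ : SF) (ξ : Fin 3 → SF) (i : Fin 3) : SF := fun x => -(Φ x ^ 2)⁻¹ * ξ i x

/-- vorticity `ω_{ij} = ½ (δ_i A_j − δ_j A_i)`. -/
def vort (A : Fin 3 → SF) (i j : Fin 3) : SF := fun x =>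
  (1 / 2) * (sd A i (A j) x - sd A j (A i) x)

/-- `a_i = −∂_0 A_i`. -/
def aco (A : Fin 3 → SF) (i : Fin 3) : SF := fun x => -pd 0 (A i) x

/-- `c_i = Φ⁻¹ δ_i Φ`. -/
def cco (Φ : SF) (A : Fin 3 → SF) (i : Fin 3) : SF := fun x => (Φ x)⁻¹ * sd A i Φ x

/-- `b_i = a_i + c_i`. -/
def bco (Φ : SF) (A : Fin 3 → SF) (i : Fin 3) : SF := fun x => aco A i x + cco Φ A i x

/-- `Ψ = Φ⁻¹ ∂_0 Φ`. -/
def PsiF (Φ : SF) : SF := fun x => (Φ x)⁻¹ * pd 0 Φ x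

/-- inverse entries `ḡ^{ij}` of the spatial metric. -/
def ginv (gb : Fin 3 → Fin 3 → SF) (i j : Fin 3) : SF := fun x =>
  (Matrix.of fun a b => gb a b x)⁻¹ i j

/-- expansion tensor `Θ_{ij} = ½ ∂_0 ḡ_{ij}`. -/
def Th (gb : Fin 3 → Fin 3 → SF) (i j : Fin 3) : SF := fun x => (1 / 2) * pd 0 (gb i j) x

/-- expansion function `Θ = ḡ^{ij} Θ_{ij}`. -/
def ExpF (gb : Fin 3 → Fin 3 → SF) : SF := fun x => ∑ i, ∑ j, ginv gb i j x * Th gb i j x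

/-- shear `σ_{ij} = Θ_{ij} − ⅓ Θ ḡ_{ij}`. -/
def shear (gb : Fin 3 → Fin 3 → SF) (i j : Fin 3) : SF := fun x =>
  Th gb i j x - (1 / 3) * ExpF gb x * gb i j x

/-- extrinsic curvature `K_{ij} = Θ_{ij} + Φ² ω_{ij}`. -/
def Kt (Φ : SF) (A : Fin 3 → SF) (gb : Fin 3 → Fin 3 → SF) (i j : Fin 3) : SF := fun x =>
  Th gb i j x + Φ x ^ 2 * vort A i j x

/-- `K^h_i = ḡ^{hm} K_{mi}`. -/
def Km (Φ : SF) (A : Fin 3 → SF) (gb : Fin 3 → Fin 3 → SF) (h i : Fin 3) : SF := fun x =>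
  ∑ m, ginv gb h m x * Kt Φ A gb m i x

/-- coefficients `Γ̄^k_{ij}` of the Riemannian spatial connection. -/
def Gamb (A : Fin 3 → SF) (gb : Fin 3 → Fin 3 → SF) (k i j : Fin 3) : SF := fun x =>
  (1 / 2) * ∑ h, ginv gb k h x *
    (sd A i (gb h j) x + sd A j (gb h i) x - sd A h (gb i j) x)

/-- curvature `R̄^h_{i jk}` of the Riemannian spatial connection. -/
def barR (Φ : SF) (A : Fin 3 → SF) (gb : Fin 3 → Fin 3 → SF) (h i j k : Fin 3) : SF := fun x =>
  sd A k (Gamb A gb h i j) x - sd A j (Gamb A gb h i k) x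
    + (∑ l, (Gamb A gb l i j x * Gamb A gb h l k x - Gamb A gb l i k x * Gamb A gb h l j x))
    - 2 * Km Φ A gb h i x * vort A j k x

/-- spatial covariant derivative `K^h_{i|k}`. -/
def Kcov (Φ : SF) (A : Fin 3 → SF) (gb : Fin 3 → Fin 3 → SF) (h i k : Fin 3) : SF := fun x =>
  sd A k (Km Φ A gb h i) x
    + ∑ l, (Km Φ A gb l i x * Gamb A gb h l k x - Km Φ A gb h l x * Gamb A gb l i k x)

/-- mixed curvature `R̄^h_{i 0k} = K^h_{i|k} − ∂_0 Γ̄^h_{ik} + K^h_i a_k`. -/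
def barR0 (Φ : SF) (A : Fin 3 → SF) (gb : Fin 3 → Fin 3 → SF) (h i k : Fin 3) : SF := fun x =>
  Kcov Φ A gb h i k x - pd 0 (Gamb A gb h i k) x + Km Φ A gb h i x * aco A k x

/-- lowered curvature `R̄_{il jk} = ḡ_{lh} R̄^h_{i jk}`. -/
def barRlow (Φ : SF) (A : Fin 3 → SF) (gb : Fin 3 → Fin 3 → SF) (i l j k : Fin 3) : SF := fun x =>
  ∑ h, gb l h x * barR Φ A gb h i j k x

/-- lowered mixed curvature `R̄_{il 0k} = ḡ_{lh} R̄^h_{i 0k}`. -/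
def barR0low (Φ : SF) (A : Fin 3 → SF) (gb : Fin 3 → Fin 3 → SF) (i l k : Fin 3) : SF := fun x =>
  ∑ h, gb l h x * barR0 Φ A gb h i k x

/-- spatial covariant derivative `R̄^l_{h ij|k}`. -/
def barRcov (Φ : SF) (A : Fin 3 → SF) (gb : Fin 3 → Fin 3 → SF) (l h i j k : Fin 3) : SF :=
  fun x =>
  sd A k (barR Φ A gb l h i j) x
    + ∑ m, (barR Φ A gb m h i j x * Gamb A gb l m k x
        - barR Φ A gb l m i j x * Gamb A gb m h k x
        - barR Φ A gb l h m j x * Gamb A gb m i k x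
        - barR Φ A gb l h i m x * Gamb A gb m j k x)

/-- temporal covariant derivative `R̄^l_{h ij|0}`. -/
def barRcov0 (Φ : SF) (A : Fin 3 → SF) (gb : Fin 3 → Fin 3 → SF) (l h i j : Fin 3) : SF :=
  fun x =>
  pd 0 (barR Φ A gb l h i j) x
    + ∑ m, (barR Φ A gb m h i j x * Km Φ A gb l m x
        - barR Φ A gb l m i j x * Km Φ A gb m h x
        - barR Φ A gb l h m j x * Km Φ A gb m i x
        - barR Φ A gb l h i m x * Km Φ A gb m j x)

/-- spatial covariant derivative `R̄^l_{h 0i|j}`. -/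
def barR0cov (Φ : SF) (A : Fin 3 → SF) (gb : Fin 3 → Fin 3 → SF) (l h i j : Fin 3) : SF :=
  fun x =>
  sd A j (barR0 Φ A gb l h i) x
    + ∑ m, (barR0 Φ A gb m h i x * Gamb A gb l m j x
        - barR0 Φ A gb l m i x * Gamb A gb m h j x
        - barR0 Φ A gb l h m x * Gamb A gb m i j x)

/-- spatial covariant derivative `K_{ij|k}`. -/
def Ktcov (Φ : SF) (A : Fin 3 → SF) (gb : Fin 3 → Fin 3 → SF) (i j k : Fin 3) : SF := fun x =>
  sd A k (Kt Φ A gb i j) x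
    - ∑ h, (Kt Φ A gb h j x * Gamb A gb h i k x + Kt Φ A gb i h x * Gamb A gb h j k x)

/-- temporal covariant derivative `K_{ik|0}`. -/
def Ktcov0 (Φ : SF) (A : Fin 3 → SF) (gb : Fin 3 → Fin 3 → SF) (i k : Fin 3) : SF := fun x =>
  pd 0 (Kt Φ A gb i k) x
    - ∑ h, (Kt Φ A gb h k x * Km Φ A gb h i x + Kt Φ A gb i h x * Km Φ A gb h k x)

/-- spatial covariant derivative `b_{i|k} = δ_k b_i − b_h Γ̄^h_{ik}`. -/
def bcov (Φ : SF) (A : Fin 3 → SF) (gb : Fin 3 → Fin 3 → SF) (i k : Fin 3) : SF := fun x =>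
  sd A k (bco Φ A i) x - ∑ h, bco Φ A h x * Gamb A gb h i k x

/-- `σ² = ḡ^{hi} ḡ^{kj} σ_{hk} σ_{ij}`. -/
def sigma2 (gb : Fin 3 → Fin 3 → SF) : SF := fun x =>
  ∑ h, ∑ i, ∑ k, ∑ j, ginv gb h i x * ginv gb k j x * shear gb h k x * shear gb i j x

/-- `ω² = ḡ^{hi} ḡ^{kj} ω_{hk} ω_{ij}`. -/
def omega2 (A : Fin 3 → SF) (gb : Fin 3 → Fin 3 → SF) : SF := fun x =>
  ∑ h, ∑ i, ∑ k, ∑ j, ginv gb h i x * ginv gb k j x * vort A h k x * vort A i j x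

/-- `b² = ḡ^{kh} b_k b_h`. -/
def bsq (Φ : SF) (A : Fin 3 → SF) (gb : Fin 3 → Fin 3 → SF) : SF := fun x =>
  ∑ k, ∑ h, ginv gb k h x * bco Φ A k x * bco Φ A h x

/-- `b^k = ḡ^{kh} b_h`. -/
def bup (Φ : SF) (A : Fin 3 → SF) (gb : Fin 3 → Fin 3 → SF) (k : Fin 3) : SF := fun x =>
  ∑ h, ginv gb k h x * bco Φ A h x

/-- divergence `b^k_{|k} = δ_k b^k + b^l Γ̄^k_{lk}`. -/
def bdiv (Φ : SF) (A : Fin 3 → SF) (gb : Fin 3 → Fin 3 → SF) : SF := fun x =>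
  ∑ k, (sd A k (bup Φ A gb k) x + ∑ l, bup Φ A gb l x * Gamb A gb k l k x)

/-- spatial Ricci tensor `R̄_{ij} = ½(R̄^k_{i jk} + R̄^k_{j ik})`. -/
def barRic (Φ : SF) (A : Fin 3 → SF) (gb : Fin 3 → Fin 3 → SF) (i j : Fin 3) : SF := fun x =>
  (1 / 2) * ((∑ k, barR Φ A gb k i j k x) + ∑ k, barR Φ A gb k j i k x)

/-- spatial scalar curvature `R̄ = ḡ^{ij} R̄_{ij}`. -/
def barScal (Φ : SF) (A : Fin 3 → SF) (gb : Fin 3 → Fin 3 → SF) : SF := fun x =>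
  ∑ i, ∑ j, ginv gb i j x * barRic Φ A gb i j x

/-! ### 4-dimensional (spacetime) objects -/

/-- inverse entries `g^{ab}` of a spacetime metric. -/
def mginv (g : Fin 4 → Fin 4 → SF) (a b : Fin 4) : SF := fun x =>
  (Matrix.of fun c d => g c d x)⁻¹ a b

/-- Christoffel symbols `Γ^c_{ab}` of a spacetime metric. -/
def Chr (g : Fin 4 → Fin 4 → SF) (c a b : Fin 4) : SF := fun x =>
  (1 / 2) * ∑ d, mginv g c d x * (pd a (g d b) x + pd b (g d a) x - pd d (g a b) x)

/-- curvature `R^d_{c ab}` of a spacetime metric. -/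
def Riem (g : Fin 4 → Fin 4 → SF) (d c a b : Fin 4) : SF := fun x =>
  pd a (Chr g d c b) x - pd b (Chr g d c a) x
    + ∑ e, (Chr g e c b x * Chr g d e a x - Chr g e c a x * Chr g d e b x)

/-- lowered curvature `R_{dc ab} = g_{de} R^e_{c ab}`. -/
def RiemLow (g : Fin 4 → Fin 4 → SF) (d c a b : Fin 4) : SF := fun x =>
  ∑ e, g d e x * Riem g e c a b x

/-- Ricci tensor `Ric_{cb} = R^a_{c ab}`. -/
def Ricc (g : Fin 4 → Fin 4 → SF) (c b : Fin 4) : SF := fun x => ∑ a, Riem g a c a b x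

/-- scalar curvature `𝐑 = g^{ab} Ric_{ab}`. -/
def Scal (g : Fin 4 → Fin 4 → SF) : SF := fun x => ∑ a, ∑ b, mginv g a b x * Ricc g a b x

/-- Einstein tensor `G_{ab} = Ric_{ab} − ½ 𝐑 g_{ab}`. -/
def Einst (g : Fin 4 → Fin 4 → SF) (a b : Fin 4) : SF := fun x =>
  Ricc g a b x - (1 / 2) * Scal g x * g a b x

/-- the spacetime metric determined by `Φ, ξ_i, ḡ_{ij}`:
`g_{00} = −Φ²`, `g_{0i} = g_{i0} = ξ_i`, `g_{ij} = ḡ_{ij} − Φ⁻² ξ_i ξ_j`. -/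
def gmet (Φ : SF) (ξ : Fin 3 → SF) (gb : Fin 3 → Fin 3 → SF) (a b : Fin 4) : SF := fun x =>
  Fin.cases
    (Fin.cases (-(Φ x ^ 2)) (fun j => ξ j x) b)
    (fun i => Fin.cases (ξ i x) (fun j => gb i j x - (Φ x ^ 2)⁻¹ * ξ i x * ξ j x) b) a

/-- the threading frame: `e_0^a = δ^a_0`, `e_i^a = δ^a_i − A_i δ^a_0`. -/
def frameV (Φ : SF) (ξ : Fin 3 → SF) (P : Fin 4) (x : Pt) (a : Fin 4) : ℝ :=
  Fin.cases ((if a = 0 then (1 : ℝ) else 0))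
    (fun i => (if a = i.succ then (1 : ℝ) else 0)
      - Acoef Φ ξ i x * (if a = 0 then (1 : ℝ) else 0)) P

/-- frame components `R_{PQ ST} = e_Q^d e_P^c e_T^a e_S^b R_{dc ab}` of the curvature. -/
def RiemF (Φ : SF) (ξ : Fin 3 → SF) (gb : Fin 3 → Fin 3 → SF) (P Q S T : Fin 4) : SF := fun x =>
  ∑ d, ∑ c, ∑ a, ∑ b,
    frameV Φ ξ Q x d * frameV Φ ξ P x c * frameV Φ ξ T x a * frameV Φ ξ S x b *
      RiemLow (gmet Φ ξ gb) d c a b x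


section Helpers
variable {gb : Fin 3 → Fin 3 → SF} {U : Set Pt} {x : Pt}

-- calculus helpers (already tested)
lemma pd_congr {a : Fin 4} {f g : SF} {x : Pt} (h : f =ᶠ[nhds x] g) : pd a f x = pd a g x := by
  unfold pd; rw [h.fderiv_eq]

lemma pd_const {a : Fin 4} {x : Pt} (c : ℝ) : pd a (fun _ => c) x = 0 := by
  unfold pd; simp

lemma pd_mul {a : Fin 4} {f g : SF} {x : Pt} (hf : DifferentiableAt ℝ f x)
    (hg : DifferentiableAt ℝ g x) :
    pd a (fun y => f y * g y) x = pd a f x * g x + f x * pd a g x := by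
  unfold pd; rw [fderiv_fun_mul hf hg]; simp; ring

lemma pd_sum {a : Fin 4} {x : Pt} {ι : Type*} (s : Finset ι) {f : ι → SF}
    (hf : ∀ i ∈ s, DifferentiableAt ℝ (f i) x) :
    pd a (fun y => ∑ i ∈ s, f i y) x = ∑ i ∈ s, pd a (f i) x := by
  unfold pd; rw [fderiv_fun_sum hf]; simp

lemma pd_sub {a : Fin 4} {f g : SF} {x : Pt} (hf : DifferentiableAt ℝ f x)
    (hg : DifferentiableAt ℝ g x) :
    pd a (fun y => f y - g y) x = pd a f x - pd a g x := by
  unfold pd; rw [fderiv_fun_sub hf hg]; simp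

lemma pd_const_mul {a : Fin 4} {f : SF} {x : Pt} (c : ℝ) (hf : DifferentiableAt ℝ f x) :
    pd a (fun y => c * f y) x = c * pd a f x := by
  unfold pd; rw [fderiv_const_mul hf]; simp

lemma contDiffAt_pd {a : Fin 4} {f : SF} {x : Pt} (hf : ContDiffAt ℝ (⊤ : ℕ∞) f x) :
    ContDiffAt ℝ (⊤ : ℕ∞) (pd a f) x := by
  have h1 : ContDiffAt ℝ (⊤ : ℕ∞) (fderiv ℝ f) x := hf.fderiv_right (by simp)
  exact h1.clm_apply contDiffAt_const

lemma pd_comm {a b : Fin 4} {f : SF} {x : Pt} (hf : ContDiffAt ℝ (⊤ : ℕ∞) f x) :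
    pd a (pd b f) x = pd b (pd a f) x := by
  have hd : DifferentiableAt ℝ (fderiv ℝ f) x :=
    (hf.fderiv_right (m := (⊤ : ℕ∞)) (by simp)).differentiableAt (by simp)
  have hsym := hf.isSymmSndFDerivAt (by simp [minSmoothness_of_isRCLikeNormedField]; exact WithTop.coe_le_coe.mpr (le_top : (2 : ℕ∞) ≤ ⊤))
  unfold pd
  rw [fderiv_clm_apply hd (differentiableAt_const _),
    fderiv_clm_apply hd (differentiableAt_const _)]
  simp [hsym (Pi.single a 1) (Pi.single b 1)]

-- matrix helpers (already tested)
lemma diffAt_det (N : Fin 3 → Fin 3 → SF) (h : ∀ a b, DifferentiableAt ℝ (N a b) x) :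
    DifferentiableAt ℝ (fun y => (Matrix.of fun a b => N a b y).det) x := by
  simp only [Matrix.det_fin_three, Matrix.of_apply]
  exact ((((((h 0 0).mul (h 1 1)).mul (h 2 2)).sub (((h 0 0).mul (h 1 2)).mul (h 2 1))).sub
    (((h 0 1).mul (h 1 0)).mul (h 2 2))).add (((h 0 1).mul (h 1 2)).mul (h 2 0))).add
    (((h 0 2).mul (h 1 0)).mul (h 2 1)) |>.sub (((h 0 2).mul (h 1 1)).mul (h 2 0))

lemma gb_symm (hpos : ∀ x ∈ U, (Matrix.of fun i j => gb i j x).PosDef) (hx : x ∈ U)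
    (i j : Fin 3) : gb i j x = gb j i x := by
  have := (hpos x hx).1
  have h2 := congrFun (congrFun this j) i
  simpa using h2

lemma ginv_symm (hpos : ∀ x ∈ U, (Matrix.of fun i j => gb i j x).PosDef) (hx : x ∈ U)
    (i j : Fin 3) : ginv gb i j x = ginv gb j i x := by
  have h1 : Matrix.transpose (Matrix.of fun i j => gb i j x) = Matrix.of fun i j => gb i j x := by
    have := (hpos x hx).1
    simpa [Matrix.IsHermitian] using this
  have h3 := Matrix.transpose_nonsing_inv (Matrix.of fun i j => gb i j x)
  rw [h1] at h3
  have h2 := congrFun (congrFun h3 i) j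
  rw [Matrix.transpose_apply] at h2
  simpa [ginv] using h2.symm

lemma ginv_mul (hpos : ∀ x ∈ U, (Matrix.of fun i j => gb i j x).PosDef) (hx : x ∈ U)
    (i j : Fin 3) : ∑ l, ginv gb i l x * gb l j x = if i = j then 1 else 0 := by
  have hdet : (Matrix.of fun a b => gb a b x).det ≠ 0 := (hpos x hx).det_pos.ne'
  have := congrFun (congrFun (Matrix.nonsing_inv_mul _ (isUnit_iff_ne_zero.mpr hdet)) i) j
  rw [Matrix.mul_apply] at this
  simpa [ginv, Matrix.one_apply] using this

lemma mul_ginv (hpos : ∀ x ∈ U, (Matrix.of fun i j => gb i j x).PosDef) (hx : x ∈ U)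
    (i j : Fin 3) : ∑ l, gb i l x * ginv gb l j x = if i = j then 1 else 0 := by
  have hdet : (Matrix.of fun a b => gb a b x).det ≠ 0 := (hpos x hx).det_pos.ne'
  have := congrFun (congrFun (Matrix.mul_nonsing_inv _ (isUnit_iff_ne_zero.mpr hdet)) i) j
  rw [Matrix.mul_apply] at this
  simpa [ginv, Matrix.one_apply] using this

lemma ginv_diffAt (hU : IsOpen U) (hgb : ∀ i j, ContDiffOn ℝ (⊤ : ℕ∞) (gb i j) U)
    (hpos : ∀ x ∈ U, (Matrix.of fun i j => gb i j x).PosDef) (hx : x ∈ U) (i j : Fin 3) :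
    DifferentiableAt ℝ (ginv gb i j) x := by
  have hd : ∀ a b, ∀ y ∈ U, DifferentiableAt ℝ (gb a b) y := fun a b y hy =>
    ((hgb a b).contDiffAt (hU.mem_nhds hy)).differentiableAt (by simp)
  have hform : ∀ y : Pt, ginv gb i j y =
      ((Matrix.of fun a b => gb a b y).det)⁻¹ *
        (Matrix.of fun a b =>
          (if a = j then (Pi.single i 1 : Fin 3 → ℝ) b else gb a b y)).det := by
    intro y
    have : (Matrix.of fun a b => (if a = j then (Pi.single i 1 : Fin 3 → ℝ) b else gb a b y)) =
        (Matrix.of fun a b => gb a b y).updateRow j (Pi.single i 1) := by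
      ext a b; simp [Matrix.updateRow_apply]
    rw [this, ← Matrix.adjugate_apply, ginv, Matrix.inv_def, Ring.inverse_eq_inv']
    simp
  have : DifferentiableAt ℝ (fun y => ((Matrix.of fun a b => gb a b y).det)⁻¹ *
      (Matrix.of fun a b =>
        (if a = j then (Pi.single i 1 : Fin 3 → ℝ) b else gb a b y)).det) x := by
    apply DifferentiableAt.mul
    · exact (diffAt_det gb (fun a b => hd a b x hx)).inv (hpos x hx).det_pos.ne'
    · apply diffAt_det
      intro a b
      by_cases hc : a = j <;> simp [hc]
      exact hd a b x hx
  exact this.congr_of_eventuallyEq (Filter.Eventually.of_forall hform)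

-- derivative of the inverse metric
lemma pd_ginv (hU : IsOpen U) (hgb : ∀ i j, ContDiffOn ℝ (⊤ : ℕ∞) (gb i j) U)
    (hpos : ∀ x ∈ U, (Matrix.of fun i j => gb i j x).PosDef) (hx : x ∈ U)
    (a : Fin 4) (i j : Fin 3) :
    pd a (ginv gb i j) x = -∑ h, ∑ l, ginv gb i h x * pd a (gb h l) x * ginv gb l j x := by
  have dgb : ∀ c d, DifferentiableAt ℝ (gb c d) x := fun c d =>
    ((hgb c d).contDiffAt (hU.mem_nhds hx)).differentiableAt (by simp)
  have dginv : ∀ c d, DifferentiableAt ℝ (ginv gb c d) x := ginv_diffAt hU hgb hpos hx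
  have hrel : ∀ m : Fin 3, ∑ l, pd a (ginv gb i l) x * gb l m x
      = -∑ l, ginv gb i l x * pd a (gb l m) x := by
    intro m
    have hev : (fun y => ∑ l, ginv gb i l y * gb l m y) =ᶠ[nhds x]
        (fun _ => if i = m then (1:ℝ) else 0) :=
      Filter.eventuallyEq_of_mem (hU.mem_nhds hx) fun y hy => ginv_mul hpos hy i m
    have h0 : pd a (fun y => ∑ l, ginv gb i l y * gb l m y) x = 0 := by
      rw [pd_congr hev, pd_const]
    have h1 : pd a (fun y => ∑ l, ginv gb i l y * gb l m y) x
        = ∑ l, (pd a (ginv gb i l) x * gb l m x + ginv gb i l x * pd a (gb l m) x) := by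
      rw [pd_sum Finset.univ (f := fun l => fun y => ginv gb i l y * gb l m y)
        (fun l _ => (dginv i l).mul (dgb l m))]
      exact Finset.sum_congr rfl fun l _ => pd_mul (dginv i l) (dgb l m)
    rw [h1, Finset.sum_add_distrib] at h0
    linarith [h0]
  calc pd a (ginv gb i j) x
      = ∑ l, pd a (ginv gb i l) x * (if l = j then (1:ℝ) else 0) := by simp
    _ = ∑ l, pd a (ginv gb i l) x * ∑ m, gb l m x * ginv gb m j x := by
        refine Finset.sum_congr rfl fun l _ => ?_
        rw [mul_ginv hpos hx l j]
    _ = ∑ m, (∑ l, pd a (ginv gb i l) x * gb l m x) * ginv gb m j x := by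
        simp only [Finset.mul_sum, Finset.sum_mul, mul_assoc]
        exact Finset.sum_comm
    _ = ∑ m, (-∑ l, ginv gb i l x * pd a (gb l m) x) * ginv gb m j x := by
        refine Finset.sum_congr rfl fun m _ => ?_
        rw [hrel m]
    _ = -∑ h, ∑ l, ginv gb i h x * pd a (gb h l) x * ginv gb l j x := by
        simp only [neg_mul, Finset.sum_mul, Finset.sum_neg_distrib]
        rw [Finset.sum_comm]

end Helpers


section Main
variable {gb : Fin 3 → Fin 3 → SF} {U : Set Pt} {x : Pt}

lemma pd_ExpF (hU : IsOpen U) (hgb : ∀ i j, ContDiffOn ℝ (⊤ : ℕ∞) (gb i j) U)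
    (hpos : ∀ x ∈ U, (Matrix.of fun i j => gb i j x).PosDef) (hx : x ∈ U) (a : Fin 4) :
    pd a (ExpF gb) x = ∑ i, ∑ j, (pd a (ginv gb i j) x * ((1 / 2) * pd 0 (gb i j) x)
      + ginv gb i j x * ((1 / 2) * pd a (pd 0 (gb i j)) x)) := by
  have hgbC : ∀ c d, ContDiffAt ℝ (⊤ : ℕ∞) (gb c d) x := fun c d =>
    (hgb c d).contDiffAt (hU.mem_nhds hx)
  have dTh : ∀ i j, DifferentiableAt ℝ (Th gb i j) x := fun i j =>
    ((contDiffAt_pd (hgbC i j)).differentiableAt (by simp)).const_mul _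
  have dginv : ∀ c d, DifferentiableAt ℝ (ginv gb c d) x := ginv_diffAt hU hgb hpos hx
  have step : pd a (ExpF gb) x = ∑ i, ∑ j, (pd a (ginv gb i j) x * Th gb i j x
      + ginv gb i j x * pd a (Th gb i j) x) := by
    rw [show ExpF gb = fun y => ∑ i, ∑ j, ginv gb i j y * Th gb i j y from rfl]
    rw [pd_sum Finset.univ (f := fun i => fun y => ∑ j, ginv gb i j y * Th gb i j y)
      (fun i _ => DifferentiableAt.fun_sum fun j _ => (dginv i j).mul (dTh i j))]
    refine Finset.sum_congr rfl fun i _ => ?_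
    rw [pd_sum Finset.univ (f := fun j => fun y => ginv gb i j y * Th gb i j y)
      (fun j _ => (dginv i j).mul (dTh i j))]
    exact Finset.sum_congr rfl fun j _ => pd_mul (dginv i j) (dTh i j)
  rw [step]
  refine Finset.sum_congr rfl fun i _ => Finset.sum_congr rfl fun j _ => ?_
  rw [show Th gb i j x = (1 / 2) * pd 0 (gb i j) x from rfl,
    show pd a (Th gb i j) x = pd a (fun y => (1 / 2) * pd 0 (gb i j) y) x from rfl,
    pd_const_mul _ ((contDiffAt_pd (hgbC i j)).differentiableAt (by simp))]

lemma sum_Gamb (A : Fin 3 → SF)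
    (hpos : ∀ x ∈ U, (Matrix.of fun i j => gb i j x).PosDef) (hx : x ∈ U) (k : Fin 3) :
    ∑ i, Gamb A gb i i k x
      = (1 / 2) * ∑ i, ∑ h, ginv gb i h x * (pd k.succ (gb h i) x - A k x * pd 0 (gb h i) x) := by
  have hg := ginv_symm hpos hx
  simp only [Gamb, sd, Fin.sum_univ_three]
  rw [hg 1 0, hg 2 0, hg 2 1]
  ring

lemma pd_sumGamb (A : Fin 3 → SF) (hU : IsOpen U)
    (hgb : ∀ i j, ContDiffOn ℝ (⊤ : ℕ∞) (gb i j) U)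
    (hpos : ∀ x ∈ U, (Matrix.of fun i j => gb i j x).PosDef) (hx : x ∈ U)
    (k : Fin 3) (hA : DifferentiableAt ℝ (A k) x) :
    pd 0 (fun y => ∑ i, Gamb A gb i i k y) x
      = (1 / 2) * ∑ i, ∑ h,
          (pd 0 (ginv gb i h) x * (pd k.succ (gb h i) x - A k x * pd 0 (gb h i) x)
            + ginv gb i h x * (pd 0 (pd k.succ (gb h i)) x
              - (pd 0 (A k) x * pd 0 (gb h i) x + A k x * pd 0 (pd 0 (gb h i)) x))) := by
  have hgbC : ∀ c d, ContDiffAt ℝ (⊤ : ℕ∞) (gb c d) x := fun c d =>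
    (hgb c d).contDiffAt (hU.mem_nhds hx)
  have dpd : ∀ (a : Fin 4) (c d : Fin 3), DifferentiableAt ℝ (pd a (gb c d)) x := fun a c d =>
    (contDiffAt_pd (hgbC c d)).differentiableAt (by simp)
  have dginv : ∀ c d, DifferentiableAt ℝ (ginv gb c d) x := ginv_diffAt hU hgb hpos hx
  have dfac : ∀ h i : Fin 3,
      DifferentiableAt ℝ (fun y => pd k.succ (gb h i) y - A k y * pd 0 (gb h i) y) x :=
    fun h i => (dpd k.succ h i).sub (hA.mul (dpd 0 h i))
  have hev : (fun y => ∑ i, Gamb A gb i i k y) =ᶠ[nhds x]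
      (fun y => (1 / 2) * ∑ i, ∑ h,
        ginv gb i h y * (pd k.succ (gb h i) y - A k y * pd 0 (gb h i) y)) :=
    Filter.eventuallyEq_of_mem (hU.mem_nhds hx) fun y hy => sum_Gamb A hpos hy k
  rw [pd_congr hev]
  rw [pd_const_mul _ (DifferentiableAt.fun_sum fun i _ =>
    DifferentiableAt.fun_sum fun h _ => (dginv i h).fun_mul (dfac h i))]
  congr 1
  rw [pd_sum Finset.univ (f := fun i => fun y => ∑ h,
      ginv gb i h y * (pd k.succ (gb h i) y - A k y * pd 0 (gb h i) y))
    (fun i _ => DifferentiableAt.fun_sum fun h _ => (dginv i h).mul (dfac h i))]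
  refine Finset.sum_congr rfl fun i _ => ?_
  rw [pd_sum Finset.univ (f := fun h => fun y =>
      ginv gb i h y * (pd k.succ (gb h i) y - A k y * pd 0 (gb h i) y))
    (fun h _ => (dginv i h).mul (dfac h i))]
  refine Finset.sum_congr rfl fun h _ => ?_
  rw [pd_mul (dginv i h) (dfac h i), pd_sub (dpd k.succ h i) (hA.fun_mul (dpd 0 h i)),
    pd_mul hA (dpd 0 h i)]

end Main

lemma key_alg (G P D Q R : Fin 3 → Fin 3 → ℝ) (Av A' : ℝ)
    (hG : ∀ i j, G i j = G j i) (hP : ∀ i j, P i j = P j i) (hD : ∀ i j, D i j = D j i)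
    (hQ : ∀ i j, Q i j = Q j i) (hR : ∀ i j, R i j = R j i) :
    ((∑ i, ∑ j, ((-∑ h, ∑ l, G i h * D h l * G l j) * ((1/2) * P i j)
        + G i j * ((1/2) * R i j)))
      - Av * (∑ i, ∑ j, ((-∑ h, ∑ l, G i h * P h l * G l j) * ((1/2) * P i j)
        + G i j * ((1/2) * Q i j))))
    = (1/2) * (∑ i, ∑ h, ((-∑ m, ∑ l, G i m * P m l * G l h) * (D h i - Av * P h i)
          + G i h * (R h i - (A' * P h i + Av * Q h i))))
      + (∑ i, ∑ j, G i j * ((1/2) * P i j)) * A' := by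
  simp only [Fin.sum_univ_three]
  simp only [hG 1 0, hG 2 0, hG 2 1, hP 1 0, hP 2 0, hP 2 1, hD 1 0, hD 2 0, hD 2 1,
    hQ 1 0, hQ 2 0, hQ 2 1, hR 1 0, hR 2 0, hR 2 1]
  ring


/-- equation (3.6): the expansion function satisfies
`δ_k Θ = ∂_0 (Γ̄^i_{ik}) − Θ a_k` on `U` (sum over `i`). -/
theorem stmt_4 (U : Set Pt) (hU : IsOpen U)
    (Φ : SF) (ξ : Fin 3 → SF) (gb : Fin 3 → Fin 3 → SF)
    (hΦ : ContDiffOn ℝ (⊤ : ℕ∞) Φ U) (hΦ0 : ∀ x ∈ U, Φ x ≠ 0)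
    (hξ : ∀ i, ContDiffOn ℝ (⊤ : ℕ∞) (ξ i) U)
    (hgb : ∀ i j, ContDiffOn ℝ (⊤ : ℕ∞) (gb i j) U)
    (hpos : ∀ x ∈ U, (Matrix.of fun i j => gb i j x).PosDef) :
    ∀ x ∈ U, ∀ k : Fin 3,
      sd (Acoef Φ ξ) k (ExpF gb) x
        = pd 0 (fun y => ∑ i, Gamb (Acoef Φ ξ) gb i i k y) x
          - ExpF gb x * aco (Acoef Φ ξ) k x := by
  intro x hx k
  have hgbC : ∀ c d, ContDiffAt ℝ (⊤ : ℕ∞) (gb c d) x := fun c d =>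
    (hgb c d).contDiffAt (hU.mem_nhds hx)
  have hA : ContDiffAt ℝ (⊤ : ℕ∞) (Acoef Φ ξ k) x := by
    have h1 : ContDiffAt ℝ (⊤ : ℕ∞) Φ x := hΦ.contDiffAt (hU.mem_nhds hx)
    have h2 : ContDiffAt ℝ (⊤ : ℕ∞) (ξ k) x := (hξ k).contDiffAt (hU.mem_nhds hx)
    exact (((h1.pow 2).inv (pow_ne_zero 2 (hΦ0 x hx))).neg).mul h2
  have hsymgb : ∀ i j : Fin 3, gb i j =ᶠ[nhds x] gb j i := fun i j =>
    Filter.eventuallyEq_of_mem (hU.mem_nhds hx) fun y hy => gb_symm hpos hy i j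
  have hsympd : ∀ (a : Fin 4) (i j : Fin 3), pd a (gb i j) =ᶠ[nhds x] pd a (gb j i) :=
    fun a i j => Filter.eventuallyEq_of_mem (hU.mem_nhds hx) fun y hy =>
      pd_congr (Filter.eventuallyEq_of_mem (hU.mem_nhds hy) fun z hz => gb_symm hpos hz i j)
  have hG : ∀ i j, ginv gb i j x = ginv gb j i x := ginv_symm hpos hx
  have hP : ∀ i j, pd 0 (gb i j) x = pd 0 (gb j i) x := fun i j => pd_congr (hsymgb i j)
  have hD : ∀ i j, pd k.succ (gb i j) x = pd k.succ (gb j i) x := fun i j =>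
    pd_congr (hsymgb i j)
  have hQ : ∀ i j, pd 0 (pd 0 (gb i j)) x = pd 0 (pd 0 (gb j i)) x := fun i j =>
    pd_congr (hsympd 0 i j)
  have hR : ∀ i j, pd k.succ (pd 0 (gb i j)) x = pd k.succ (pd 0 (gb j i)) x := fun i j =>
    pd_congr (hsympd 0 i j)
  have hcomm : ∀ h i : Fin 3, pd 0 (pd k.succ (gb h i)) x = pd k.succ (pd 0 (gb h i)) x :=
    fun h i => pd_comm (hgbC h i)
  have LHSeq : sd (Acoef Φ ξ) k (ExpF gb) x =
      ((∑ i, ∑ j, ((-∑ h, ∑ l, ginv gb i h x * pd k.succ (gb h l) x * ginv gb l j x)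
            * ((1 / 2) * pd 0 (gb i j) x)
          + ginv gb i j x * ((1 / 2) * pd k.succ (pd 0 (gb i j)) x)))
        - Acoef Φ ξ k x * (∑ i, ∑ j,
            ((-∑ h, ∑ l, ginv gb i h x * pd 0 (gb h l) x * ginv gb l j x)
              * ((1 / 2) * pd 0 (gb i j) x)
            + ginv gb i j x * ((1 / 2) * pd 0 (pd 0 (gb i j)) x)))) := by
    rw [show sd (Acoef Φ ξ) k (ExpF gb) x
        = pd k.succ (ExpF gb) x - Acoef Φ ξ k x * pd 0 (ExpF gb) x from rfl,
      pd_ExpF hU hgb hpos hx k.succ, pd_ExpF hU hgb hpos hx 0]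
    simp only [pd_ginv hU hgb hpos hx]
  have RHSeq : pd 0 (fun y => ∑ i, Gamb (Acoef Φ ξ) gb i i k y) x
        - ExpF gb x * aco (Acoef Φ ξ) k x =
      ((1 / 2) * (∑ i, ∑ h,
          ((-∑ m, ∑ l, ginv gb i m x * pd 0 (gb m l) x * ginv gb l h x)
              * (pd k.succ (gb h i) x - Acoef Φ ξ k x * pd 0 (gb h i) x)
            + ginv gb i h x * (pd k.succ (pd 0 (gb h i)) x
              - (pd 0 (Acoef Φ ξ k) x * pd 0 (gb h i) x
                + Acoef Φ ξ k x * pd 0 (pd 0 (gb h i)) x))))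
        + (∑ i, ∑ j, ginv gb i j x * ((1 / 2) * pd 0 (gb i j) x)) * pd 0 (Acoef Φ ξ k) x) := by
    rw [pd_sumGamb (Acoef Φ ξ) hU hgb hpos hx k (hA.differentiableAt (by simp))]
    simp only [pd_ginv hU hgb hpos hx, hcomm, ExpF, Th, aco]
    ring
  rw [LHSeq, RHSeq]
  exact key_alg (fun i j => ginv gb i j x) (fun i j => pd 0 (gb i j) x)
    (fun i j => pd k.succ (gb i j) x) (fun i j => pd 0 (pd 0 (gb i j)) x)
    (fun i j => pd k.succ (pd 0 (gb i j)) x) (Acoef Φ ξ k x) (pd 0 (Acoef Φ ξ k) x)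
    hG hP hD hQ hR
end
end

section
/- First Bianchi identity for the Riemannian spatial connection (equation (3.13)): for all h, i, j, k ∈ {1,2,3}, the cyclic sum over (i,j,k) of bar R^h_{i jk} + 2 K^h_i ω_{jk} vanishes, i.e. (bar R^h_{i jk} + 2 K^h_i ω_{jk}) + (bar R^h_{j ki} + 2 K^h_j ω_{ki}) + (bar R^h_{k ij} + 2 K^h_k ω_{ij}) = 0 on U. -/
noncomputable section

/-- Symmetry of the connection coefficients in the lower indices, on an open set where
the metric components are symmetric. -/
lemma Gamb_symm_aux (A : Fin 3 → SF) (gb : Fin 3 → Fin 3 → SF) (U : Set Pt) (hU : IsOpen U)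
    (hs : ∀ i j, ∀ y ∈ U, gb i j y = gb j i y) :
    ∀ y ∈ U, ∀ k i j, Gamb A gb k i j y = Gamb A gb k j i y := by
  intro y hy k i j
  have hpd : ∀ (a : Fin 4) (i j : Fin 3), pd a (gb i j) y = pd a (gb j i) y := by
    intro a i j
    have he : gb i j =ᶠ[nhds y] gb j i :=
      Filter.eventuallyEq_of_mem (hU.mem_nhds hy) (fun z hz => hs i j z hz)
    simp only [pd, he.fderiv_eq]
  simp only [Gamb]
  congr 1
  apply Finset.sum_congr rfl
  intro m _
  simp only [sd, hpd, hs i j y hy]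
  ring

/-- equation (3.13): first Bianchi identity for the Riemannian spatial
connection: the cyclic sum over `(i,j,k)` of `R̄^h_{i jk} + 2 K^h_i ω_{jk}` vanishes. -/
theorem stmt_6 (U : Set Pt) (hU : IsOpen U)
    (Φ : SF) (ξ : Fin 3 → SF) (gb : Fin 3 → Fin 3 → SF)
    (hΦ : ContDiffOn ℝ (⊤ : ℕ∞) Φ U) (hΦ0 : ∀ x ∈ U, Φ x ≠ 0)
    (hξ : ∀ i, ContDiffOn ℝ (⊤ : ℕ∞) (ξ i) U)
    (hgb : ∀ i j, ContDiffOn ℝ (⊤ : ℕ∞) (gb i j) U)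
    (hpos : ∀ x ∈ U, (Matrix.of fun i j => gb i j x).PosDef) :
    ∀ x ∈ U, ∀ h i j k : Fin 3,
      (barR Φ (Acoef Φ ξ) gb h i j k x
          + 2 * Km Φ (Acoef Φ ξ) gb h i x * vort (Acoef Φ ξ) j k x)
        + (barR Φ (Acoef Φ ξ) gb h j k i x
          + 2 * Km Φ (Acoef Φ ξ) gb h j x * vort (Acoef Φ ξ) k i x)
        + (barR Φ (Acoef Φ ξ) gb h k i j x
          + 2 * Km Φ (Acoef Φ ξ) gb h k x * vort (Acoef Φ ξ) i j x) = 0 := by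
  set A := Acoef Φ ξ with hA
  have hs : ∀ i j, ∀ y ∈ U, gb i j y = gb j i y := by
    intro i j y hy
    have := (hpos y hy).1
    have h2 := congrFun (congrFun this i) j
    simpa [Matrix.conjTranspose_apply] using h2.symm
  have hΓ := Gamb_symm_aux A gb U hU hs
  intro x hx h i j k
  have hsd : ∀ (m a b c : Fin 3),
      sd A m (Gamb A gb a b c) x = sd A m (Gamb A gb a c b) x := by
    intro m a b c
    have he : Gamb A gb a b c =ᶠ[nhds x] Gamb A gb a c b :=
      Filter.eventuallyEq_of_mem (hU.mem_nhds hx) (fun y hy => hΓ y hy a b c)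
    simp only [sd, pd, he.fderiv_eq]
  have hq : (∑ l, (Gamb A gb l i j x * Gamb A gb h l k x
                - Gamb A gb l i k x * Gamb A gb h l j x))
      + (∑ l, (Gamb A gb l j k x * Gamb A gb h l i x
                - Gamb A gb l j i x * Gamb A gb h l k x))
      + (∑ l, (Gamb A gb l k i x * Gamb A gb h l j x
                - Gamb A gb l k j x * Gamb A gb h l i x)) = 0 := by
    rw [← Finset.sum_add_distrib, ← Finset.sum_add_distrib]
    apply Finset.sum_eq_zero
    intro l _
    rw [hΓ x hx l j i, hΓ x hx l k i, hΓ x hx l k j]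
    ring
  simp only [barR]
  rw [hsd k h j i, hsd i h k j, hsd j h k i]
  linear_combination hq
end
end

section
/- Theorem 9.1: Let (M,g) be an almost FLRW universe, i.e. U ⊆ ℝ⁴ open with the metric g_{00} = −a²(1+2A), g_{0i} = 0, g_{ij} = a²(1−2B)δ_{ij}, where a > 0 is a smooth function of x⁰ alone and A, B are smooth with 1+2A > 0 and 1−2B > 0. In the (1+3) threading with respect to ∂/∂x⁰ one has ξ_i = g_{0i} = 0, bar g_{ij} = a²(1−2B)δ_{ij}, and: (i) the vorticity and shear vanish identically, ω_{ij} = 0 and σ_{ij} = 0 on U; (ii) the expansion tensor is umbilical, Θ_{ij} = (1/3) Θ bar g_{ij} on U (so the leaves x⁰ = const are totally umbilical hypersurfaces), and the expansion function is Θ = 3(𝓗 − B′/(1−2B)), where ′ = ∂_0 and 𝓗 = a′/a is the Hubble parameter. -/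
noncomputable section

/-- the spatial metric `ḡ_{ij} = a²(1−2B)δ_{ij}` of an almost FLRW universe. -/
def flrwGb (a : ℝ → ℝ) (B : SF) : Fin 3 → Fin 3 → SF := fun i j x =>
  a (x 0) ^ 2 * (1 - 2 * B x) * (if i = j then 1 else 0)

/-- the lapse `Φ` of an almost FLRW universe, with `Φ² = a²(1+2A)`. -/
def flrwPhi (a : ℝ → ℝ) (A : SF) : SF := fun x => a (x 0) * Real.sqrt (1 + 2 * A x)

/-- Theorem 9.1: in an almost FLRW universe, with the `(1+3)`
threading with respect to `∂/∂x⁰` (so `ξ_i = g_{0i} = 0` and `ḡ_{ij} = a²(1−2B)δ_{ij}`):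
(i) the vorticity and the shear vanish identically; (ii) the expansion tensor is
umbilical, `Θ_{ij} = ⅓ Θ ḡ_{ij}`, and `Θ = 3(𝓗 − B′/(1−2B))` with `𝓗 = a′/a`. -/
theorem stmt_17 (U : Set Pt) (hU : IsOpen U)
    (a : ℝ → ℝ) (ha : ContDiff ℝ (⊤ : ℕ∞) a) (hapos : ∀ t, 0 < a t)
    (A B : SF) (hA : ContDiffOn ℝ (⊤ : ℕ∞) A U) (hB : ContDiffOn ℝ (⊤ : ℕ∞) B U)
    (hA1 : ∀ x ∈ U, 0 < 1 + 2 * A x) (hB1 : ∀ x ∈ U, 0 < 1 - 2 * B x) :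
    ∀ x ∈ U,
      (∀ i j : Fin 3,
        vort (Acoef (flrwPhi a A) (fun _ => (0 : SF))) i j x = 0)
      ∧ (∀ i j : Fin 3, shear (flrwGb a B) i j x = 0)
      ∧ (∀ i j : Fin 3,
        Th (flrwGb a B) i j x = (1 / 3) * ExpF (flrwGb a B) x * flrwGb a B i j x)
      ∧ ExpF (flrwGb a B) x
          = 3 * (deriv a (x 0) / a (x 0) - pd 0 B x / (1 - 2 * B x)) := by
  intro x hx
  have haane : a (x 0) ≠ 0 := (hapos _).ne'
  have hbbne : (1 - 2 * B x) ≠ 0 := (hB1 x hx).ne'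
  -- differentiability facts
  have hBd : DifferentiableAt ℝ B x :=
    ((hB.differentiableOn (by simp)) x hx).differentiableAt (hU.mem_nhds hx)
  have hproj : HasFDerivAt (fun y : Pt => y 0)
      (ContinuousLinearMap.proj (R := ℝ) (φ := fun _ : Fin 4 => ℝ) 0) x :=
    (ContinuousLinearMap.proj (R := ℝ) (φ := fun _ : Fin 4 => ℝ) 0).hasFDerivAt
  have hax : HasFDerivAt (fun y : Pt => a (y 0))
      (deriv a (x 0) • ContinuousLinearMap.proj (R := ℝ) (φ := fun _ : Fin 4 => ℝ) 0) x :=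
    (((ha.differentiable (by simp)) (x 0)).hasDerivAt).comp_hasFDerivAt x hproj
  have h2 : HasFDerivAt (fun y : Pt => 1 - 2 * B y) ((-(2 : ℝ)) • fderiv ℝ B x) x := by
    have := (hBd.hasFDerivAt.const_mul (2 : ℝ)).const_sub (1 : ℝ)
    refine this.congr_fderiv ?_; ext v; simp
  have hG : HasFDerivAt (fun y : Pt => a (y 0) * a (y 0) * (1 - 2 * B y)) _ x :=
    (hax.mul hax).mul h2
  have hP : fderiv ℝ B x (Pi.single (0 : Fin 4) 1) = pd 0 B x := rfl
  have hpdG : pd 0 (fun y : Pt => a (y 0) * a (y 0) * (1 - 2 * B y)) x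
      = 2 * a (x 0) * deriv a (x 0) * (1 - 2 * B x) - 2 * a (x 0) ^ 2 * pd 0 B x := by
    show fderiv ℝ (fun y : Pt => a (y 0) * a (y 0) * (1 - 2 * B y)) x (Pi.single 0 1) = _
    simp only [hG.fderiv, ContinuousLinearMap.add_apply, ContinuousLinearMap.smul_apply,
      ContinuousLinearMap.coe_smul', Pi.smul_apply, ContinuousLinearMap.proj_apply,
      ContinuousLinearMap.neg_apply, Pi.single_eq_same, hP, smul_eq_mul, nsmul_eq_mul, Pi.mul_apply]
    ring
  have hpdgb : ∀ i j : Fin 3, pd 0 (flrwGb a B i j) x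
      = (2 * a (x 0) * deriv a (x 0) * (1 - 2 * B x) - 2 * a (x 0) ^ 2 * pd 0 B x)
          * (if i = j then 1 else 0) := by
    intro i j
    by_cases h : i = j
    · have : flrwGb a B i j = fun y : Pt => a (y 0) * a (y 0) * (1 - 2 * B y) := by
        funext y; simp [flrwGb, h, pow_two]
      rw [this, hpdG, h]; simp
    · have : flrwGb a B i j = fun _ : Pt => (0 : ℝ) := by
        funext y; simp [flrwGb, h]
      rw [this]; simp [pd, h]
  have hTh : ∀ i j : Fin 3, Th (flrwGb a B) i j x
      = (a (x 0) * deriv a (x 0) * (1 - 2 * B x) - a (x 0) ^ 2 * pd 0 B x)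
          * (if i = j then 1 else 0) := by
    intro i j; simp only [Th, hpdgb]; ring
  -- inverse spatial metric
  have hcne : a (x 0) ^ 2 * (1 - 2 * B x) ≠ 0 := mul_ne_zero (pow_ne_zero _ haane) hbbne
  have hM : (Matrix.of fun p q : Fin 3 => flrwGb a B p q x)
      = (a (x 0) ^ 2 * (1 - 2 * B x)) • (1 : Matrix (Fin 3) (Fin 3) ℝ) := by
    ext p q
    simp [flrwGb, Matrix.one_apply]
  have hMinv : (Matrix.of fun p q : Fin 3 => flrwGb a B p q x)⁻¹
      = (a (x 0) ^ 2 * (1 - 2 * B x))⁻¹ • (1 : Matrix (Fin 3) (Fin 3) ℝ) := by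
    rw [hM]
    apply Matrix.inv_eq_right_inv
    rw [Matrix.smul_mul, Matrix.mul_smul, smul_smul, Matrix.one_mul,
      mul_inv_cancel₀ hcne, one_smul]
  have hginv : ∀ i j : Fin 3, ginv (flrwGb a B) i j x
      = (a (x 0) ^ 2 * (1 - 2 * B x))⁻¹ * (if i = j then 1 else 0) := by
    intro i j
    simp [ginv, hMinv, Matrix.smul_apply, Matrix.one_apply, smul_eq_mul]
  -- expansion function
  have hExp : ExpF (flrwGb a B) x
      = 3 * (deriv a (x 0) / a (x 0) - pd 0 B x / (1 - 2 * B x)) := by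
    simp [ExpF, hginv, hTh, Fin.sum_univ_three]
    field_simp
  -- umbilical property
  have humb : ∀ i j : Fin 3, Th (flrwGb a B) i j x
      = (1 / 3) * ExpF (flrwGb a B) x * flrwGb a B i j x := by
    intro i j
    rw [hTh, hExp]
    by_cases h : i = j
    · simp only [flrwGb, h, if_pos rfl, mul_one]
      field_simp
    · simp [flrwGb, h]
  -- vorticity
  have hA0 : ∀ i : Fin 3, Acoef (flrwPhi a A) (fun _ => (0 : SF)) i = fun _ : Pt => (0 : ℝ) := by
    intro i; funext y; simp [Acoef]
  have hvort : ∀ i j : Fin 3, vort (Acoef (flrwPhi a A) (fun _ => (0 : SF))) i j x = 0 := by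
    intro i j
    simp [vort, sd, hA0, pd]
  refine ⟨hvort, ?_, humb, hExp⟩
  intro i j
  simp only [shear, humb i j]
  ring
end
end
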